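/- With notation as in the construction of A(p) from a valuation function p on [w]², for every i ∈ w the element x_i is not in the subalgebra of A(p) generated by {x_j : j < i}. -/

import Mathlib

/-!
A `Bool`-valued assignment of the generators that satisfies the relations of `N(p)` is
represented, on a finite set `E` of indices, by the cylinder of `Fr` fixing each `u k`,
`k ∈ E`, to its value: it is nonzero by independence of the `u k`, and disjoint from every
element of `N(p)` supported in `E`. Making the `k < i` with `p k i = ≥` true and all other
`k ≠ i` false, either value at `i` gives such an assignment. If `x i = c b` with `b`
generated by the `u j`, `j < i`, then `u i ⊓ bᶜ` and `b ⊓ (u i)ᶜ` lie in `N(p)`; but the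
two assignments agree below `i`, so their cylinders lie on the same side of `b`, and one
of them lies below one of these two elements.
-/

/-- The three values `≥`, `⊥`, "undefined" of a valuation function. -/
inductive VVal : Type
  | ge : VVal
  | perp : VVal
  | und : VVal
deriving DecidableEq

/-- `p` is a valuation function on the linearly ordered set `W` (only the values on
pairs `i < j` are relevant). -/
structure IsValuation {W : Type u} [LinearOrder W] (p : W → W → VVal) : Prop where
  trans_ge : ∀ i j k : W, i < j → j < k →
    p i j = VVal.ge → p j k = VVal.ge → p i k = VVal.ge
  mix1 : ∀ i j k : W, i < j → j < k →
    p i j = VVal.perp → p i k = VVal.ge → p j k = VVal.perp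
  mix2 : ∀ i j k : W, i < j → j < k →
    p i j = VVal.ge → p i k = VVal.perp → p j k = VVal.perp
  mix3 : ∀ i j k : W, i < j → j < k →
    p i j = VVal.perp → p j k = VVal.ge → p i k = VVal.perp

/-- The elements of the Boolean subalgebra generated by a set `S`. -/
inductive BAGen {α : Type v} [BooleanAlgebra α] (S : Set α) : α → Prop
  | base {a : α} : a ∈ S → BAGen S a
  | bot : BAGen S ⊥
  | sup {a b : α} : BAGen S a → BAGen S b → BAGen S (a ⊔ b)
  | compl {a : α} : BAGen S a → BAGen S aᶜ

def SameSide {α : Type*} [BooleanAlgebra α] (e e' b : α) : Prop :=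
  (e ≤ b ∧ e' ≤ b) ∨ (e ≤ bᶜ ∧ e' ≤ bᶜ)

namespace BAGen

variable {α : Type*} [BooleanAlgebra α]

theorem mono {S T : Set α} (h : S ⊆ T) {a : α} (ha : BAGen S a) : BAGen T a := by
  induction ha with
  | base ha => exact .base (h ha)
  | bot => exact .bot
  | sup _ _ ih₁ ih₂ => exact .sup ih₁ ih₂
  | compl _ ih => exact .compl ih

theorem exists_preimage {β : Type*} [BooleanAlgebra β] (c : BoundedLatticeHom α β)
    {S : Set α} {x : β} (hx : BAGen (c '' S) x) : ∃ a, BAGen S a ∧ c a = x := by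
  induction hx with
  | base hx =>
    obtain ⟨a, ha, rfl⟩ := hx
    exact ⟨a, .base ha, rfl⟩
  | bot => exact ⟨⊥, .bot, map_bot c⟩
  | sup _ _ ih₁ ih₂ =>
    obtain ⟨a₁, h₁, rfl⟩ := ih₁
    obtain ⟨a₂, h₂, rfl⟩ := ih₂
    exact ⟨a₁ ⊔ a₂, .sup h₁ h₂, map_sup c a₁ a₂⟩
  | compl _ ih =>
    obtain ⟨a, h, rfl⟩ := ih
    exact ⟨aᶜ, .compl h, map_compl' c a⟩

theorem exists_finset_image {ι : Type*} [DecidableEq ι] {g : ι → α} {A : Set ι} {a : α}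
    (ha : BAGen (g '' A) a) : ∃ T : Finset ι, ↑T ⊆ A ∧ BAGen (g '' ↑T) a := by
  induction ha with
  | base ha =>
    obtain ⟨j, hj, rfl⟩ := ha
    exact ⟨{j}, by simpa using hj, .base ⟨j, by simp⟩⟩
  | bot => exact ⟨∅, by simp, .bot⟩
  | sup _ _ ih₁ ih₂ =>
    obtain ⟨T₁, hT₁, h₁⟩ := ih₁
    obtain ⟨T₂, hT₂, h₂⟩ := ih₂
    refine ⟨T₁ ∪ T₂, by simp [hT₁, hT₂], .sup (h₁.mono ?_) (h₂.mono ?_)⟩ <;>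
      exact Set.image_mono (by simp)
  | compl _ ih =>
    obtain ⟨T, hT, h⟩ := ih
    exact ⟨T, hT, .compl h⟩

theorem sameSide {S : Set α} {e e' b : α} (hS : ∀ s ∈ S, SameSide e e' s)
    (hb : BAGen S b) : SameSide e e' b := by
  induction hb with
  | base hs => exact hS _ hs
  | bot => exact .inr (by simp)
  | sup _ _ ih₁ ih₂ =>
    rcases ih₁ with ⟨h₁, h₁'⟩ | ⟨h₁, h₁'⟩
    · exact .inl ⟨h₁.trans le_sup_left, h₁'.trans le_sup_left⟩
    rcases ih₂ with ⟨h₂, h₂'⟩ | ⟨h₂, h₂'⟩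
    · exact .inl ⟨h₂.trans le_sup_right, h₂'.trans le_sup_right⟩
    · exact .inr (by rw [compl_sup]; exact ⟨le_inf h₁ h₂, le_inf h₁' h₂'⟩)
  | compl _ ih =>
    rcases ih with h | h
    · exact .inr (by rwa [compl_compl])
    · exact .inl h

end BAGen

section Cylinder

variable {W Fr : Type*} [BooleanAlgebra Fr] (u : W → Fr)

def cylinder (f : W → Bool) (E : Finset W) : Fr :=
  (E.filter (f · = true)).inf u ⊓ (E.filter (f · = false)).inf fun k => (u k)ᶜ

variable {u}

theorem cylinder_ne_bot
    (hind : ∀ s t : Finset W, (∀ i ∈ s, i ∉ t) → s.inf u ⊓ t.inf (fun i => (u i)ᶜ) ≠ ⊥)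
    (f : W → Bool) (E : Finset W) : cylinder u f E ≠ ⊥ :=
  hind _ _ fun k hk hk' => by simp_all

theorem cylinder_le_of_true {f : W → Bool} {E : Finset W} {k : W} (hk : k ∈ E)
    (hf : f k = true) : cylinder u f E ≤ u k :=
  inf_le_left.trans (Finset.inf_le (Finset.mem_filter.mpr ⟨hk, hf⟩))

theorem cylinder_le_compl_of_false {f : W → Bool} {E : Finset W} {k : W} (hk : k ∈ E)
    (hf : f k = false) : cylinder u f E ≤ (u k)ᶜ :=
  inf_le_right.trans (Finset.inf_le (Finset.mem_filter.mpr ⟨hk, hf⟩))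

theorem sameSide_cylinder {f g : W → Bool} {T E : Finset W} (hT : T ⊆ E)
    (hfg : ∀ k ∈ T, f k = g k) :
    ∀ s ∈ u '' ↑T, SameSide (cylinder u f E) (cylinder u g E) s := by
  rintro _ ⟨k, hk, rfl⟩
  cases hg : g k
  · exact .inr ⟨cylinder_le_compl_of_false (hT hk) ((hfg k hk).trans hg),
      cylinder_le_compl_of_false (hT hk) hg⟩
  · exact .inl ⟨cylinder_le_of_true (hT hk) ((hfg k hk).trans hg),
      cylinder_le_of_true (hT hk) hg⟩

end Cylinder

section Relations

variable {W Fr : Type*} [LinearOrder W] [BooleanAlgebra Fr] (u : W → Fr) (p : W → W → VVal)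

def relator (q : W × W) : Fr :=
  if p q.1 q.2 = VVal.perp then u q.2 ⊓ u q.1 else u q.2 ⊓ (u q.1)ᶜ

structure SatisfiesRelations (f : W → Bool) : Prop where
  perp : ∀ ⦃a b : W⦄, a < b → p a b = VVal.perp → f a = false ∨ f b = false
  ge : ∀ ⦃a b : W⦄, a < b → p a b = VVal.ge → f b = true → f a = true

variable {u p}

theorem disjoint_cylinder_relator {f : W → Bool} (hf : SatisfiesRelations p f)
    {E : Finset W} {q : W × W} (hq : q.1 < q.2)
    (hpq : p q.1 q.2 = VVal.perp ∨ p q.1 q.2 = VVal.ge) (h₁ : q.1 ∈ E) (h₂ : q.2 ∈ E) :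
    Disjoint (cylinder u f E) (relator u p q) := by
  rcases hpq with hpq | hpq
  · rw [relator, if_pos hpq]
    rcases hf.perp hq hpq with hf₁ | hf₂
    · exact (le_compl_iff_disjoint_right.mp (cylinder_le_compl_of_false h₁ hf₁)).mono_right
        inf_le_right
    · exact (le_compl_iff_disjoint_right.mp (cylinder_le_compl_of_false h₂ hf₂)).mono_right
        inf_le_left
  · rw [relator, if_neg (by simp [hpq])]
    cases hf₂ : f q.2
    · exact (le_compl_iff_disjoint_right.mp (cylinder_le_compl_of_false h₂ hf₂)).mono_right
        inf_le_left
    · exact (disjoint_compl_right_iff.mpr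
        (cylinder_le_of_true h₁ (hf.ge hq hpq hf₂))).mono_right inf_le_right

theorem exists_finset_disjoint_cylinder {a : Fr}
    (ha : ∃ F : Finset (W × W),
      (∀ q ∈ F, q.1 < q.2 ∧ (p q.1 q.2 = VVal.perp ∨ p q.1 q.2 = VVal.ge)) ∧
      a ≤ F.sup (relator u p)) :
    ∃ S : Finset W, ∀ f, SatisfiesRelations p f → ∀ E, S ⊆ E →
      Disjoint (cylinder u f E) a := by
  obtain ⟨F, hF, haF⟩ := ha
  refine ⟨F.image Prod.fst ∪ F.image Prod.snd, fun f hf E hE => Disjoint.mono_right haF ?_⟩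
  refine Finset.disjoint_sup_right.mpr fun q hq =>
    disjoint_cylinder_relator hf (hF q hq).1 (hF q hq).2 (hE ?_) (hE ?_)
  · exact Finset.mem_union_left _ (Finset.mem_image_of_mem _ hq)
  · exact Finset.mem_union_right _ (Finset.mem_image_of_mem _ hq)

def lowerAssignment (p : W → W → VVal) (i : W) (v : Bool) (k : W) : Bool :=
  if k < i then decide (p k i = VVal.ge) else if k = i then v else false

variable {i k : W} {v : Bool}

theorem lowerAssignment_of_lt (h : k < i) :
    lowerAssignment p i v k = decide (p k i = VVal.ge) :=
  if_pos h

theorem lowerAssignment_self : lowerAssignment p i v i = v := by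
  simp [lowerAssignment]

theorem lowerAssignment_of_gt (h : i < k) : lowerAssignment p i v k = false := by
  simp [lowerAssignment, h.not_gt, h.ne']

theorem satisfiesRelations_lowerAssignment (hp : IsValuation p) (i : W) (v : Bool) :
    SatisfiesRelations p (lowerAssignment p i v) where
  perp a b hab hpab := by
    rcases lt_trichotomy b i with hbi | rfl | hib
    · have hai := hab.trans hbi
      simp only [lowerAssignment_of_lt hai, lowerAssignment_of_lt hbi, decide_eq_false_iff_not]
      by_contra! h
      simp [hp.mix3 a b i hab hbi hpab h.2] at h
    · simp [lowerAssignment_of_lt hab, hpab]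
    · exact .inr (lowerAssignment_of_gt hib)
  ge a b hab hpab hb := by
    rcases lt_trichotomy b i with hbi | rfl | hib
    · rw [lowerAssignment_of_lt hbi, decide_eq_true_iff] at hb
      simp [lowerAssignment_of_lt (hab.trans hbi), hp.trans_ge a b i hab hbi hpab hb]
    · simp [lowerAssignment_of_lt hab, hpab]
    · simp [lowerAssignment_of_gt hib] at hb

end Relations

theorem generator_not_in_lower_subalgebra_general {W Fr Q : Type u} [LinearOrder W]
    [BooleanAlgebra Fr] [BooleanAlgebra Q]
    (u : W → Fr)
    (hind : ∀ s t : Finset W, (∀ i ∈ s, i ∉ t) →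
      s.inf u ⊓ t.inf (fun i => (u i)ᶜ) ≠ ⊥)
    (p : W → W → VVal) (hp : IsValuation p)
    (c : BoundedLatticeHom Fr Q)
    (hker : ∀ a : Fr, c a = ⊥ ↔ ∃ F : Finset (W × W),
      (∀ q ∈ F, q.1 < q.2 ∧ (p q.1 q.2 = VVal.perp ∨ p q.1 q.2 = VVal.ge)) ∧
      a ≤ F.sup (fun q => if p q.1 q.2 = VVal.perp then u q.2 ⊓ u q.1
        else u q.2 ⊓ (u q.1)ᶜ)) :
    ∀ i : W, ¬ BAGen {a : Q | ∃ j : W, j < i ∧ a = c (u j)} (c (u i)) := by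
  intro i hxi
  have hlower : {a : Q | ∃ j : W, j < i ∧ a = c (u j)} ⊆ c '' (u '' Set.Iio i) := by
    rintro _ ⟨j, hj, rfl⟩
    exact ⟨u j, ⟨j, hj, rfl⟩, rfl⟩
  obtain ⟨b, hb, hcb⟩ := (hxi.mono hlower).exists_preimage c
  obtain ⟨T, hT, hbT⟩ := hb.exists_finset_image
  have hdiff {x y : Fr} (h : c x = c y) : c (x ⊓ yᶜ) = ⊥ := by
    rw [map_inf, map_compl', h, inf_compl_eq_bot]
  obtain ⟨S₁, hS₁⟩ := exists_finset_disjoint_cylinder ((hker _).mp (hdiff hcb.symm))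
  obtain ⟨S₂, hS₂⟩ := exists_finset_disjoint_cylinder ((hker _).mp (hdiff hcb))
  set E := insert i (T ∪ S₁ ∪ S₂)
  have hiE : i ∈ E := Finset.mem_insert_self _ _
  have hS₁E : S₁ ⊆ E := fun k hk => by simp [E, hk]
  have hS₂E : S₂ ⊆ E := fun k hk => by simp [E, hk]
  have hsat := satisfiesRelations_lowerAssignment hp i
  have hside : SameSide (cylinder u (lowerAssignment p i false) E)
      (cylinder u (lowerAssignment p i true) E) b :=
    hbT.sameSide <| sameSide_cylinder (fun k hk => by simp [E, hk]) fun k hk => by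
      rw [lowerAssignment_of_lt (hT hk), lowerAssignment_of_lt (hT hk)]
  rcases hside with ⟨hb₀, -⟩ | ⟨-, hb₁⟩
  · refine cylinder_ne_bot hind _ E ((hS₂ _ (hsat false) E hS₂E).eq_bot_of_le ?_)
    exact le_inf hb₀ (cylinder_le_compl_of_false hiE lowerAssignment_self)
  · refine cylinder_ne_bot hind _ E ((hS₁ _ (hsat true) E hS₁E).eq_bot_of_le ?_)
    exact le_inf (cylinder_le_of_true hiE lowerAssignment_self) hb₁

/-- Remark 3.3 for `A(p) = Fr(w)/N(p)`: each canonical generator `x i = c (u i)` is not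
in the subalgebra of `A(p)` generated by `{x j : j < i}`. -/
theorem generator_not_in_lower_subalgebra {W Fr Q : Type u} [LinearOrder W]
    [BooleanAlgebra Fr] [BooleanAlgebra Q]
    (u : W → Fr)
    (hind : ∀ s t : Finset W, (∀ i ∈ s, i ∉ t) →
      s.inf u ⊓ t.inf (fun i => (u i)ᶜ) ≠ ⊥)
    (hgen : ∀ a : Fr, BAGen (Set.range u) a)
    (p : W → W → VVal) (hp : IsValuation p)
    (c : BoundedLatticeHom Fr Q) (hsurj : Function.Surjective c)
    (hker : ∀ a : Fr, c a = ⊥ ↔ ∃ F : Finset (W × W),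
      (∀ q ∈ F, q.1 < q.2 ∧ (p q.1 q.2 = VVal.perp ∨ p q.1 q.2 = VVal.ge)) ∧
      a ≤ F.sup (fun q => if p q.1 q.2 = VVal.perp then u q.2 ⊓ u q.1
        else u q.2 ⊓ (u q.1)ᶜ)) :
    ∀ i : W, ¬ BAGen {a : Q | ∃ j : W, j < i ∧ a = c (u j)} (c (u i)) :=
  generator_not_in_lower_subalgebra_general u hind p hp c hker
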